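/- arXiv:0907.0589 — 5 statements merged into one kernel-verified Lean document; each statement's English description precedes it below -/
import Mathlib

section
/- For any value α and any integer k with 1 ≤ k ≤ n, among all assignments of values to n clique vertices in which exactly k vertices receive value α, the assignment that gives value α to the k vertices maximizing ψ_{jα} − max_{v≠α} ψ_{jv} and gives every other vertex its best non-α value achieves the maximum total vertex score. -/
open Finset

/-- For any value `α` and `1 ≤ k ≤ n`, among all assignments in which exactly
`k` vertices receive value `α`, the assignment that gives `α` to a top-`k` set of vertices
(by the metric `ψ j α - max_{v ≠ α} ψ j v`) and every other vertex its best non-`α` value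
achieves the maximum total vertex score. -/
theorem alpha_pass_step_vertex_optimal
    {n : ℕ} {V : Type*} [Fintype V] [DecidableEq V]
    (ψ : Fin n → V → ℝ) (α : V) (k : ℕ) (hk1 : 1 ≤ k) (hkn : k ≤ n)
    (b : Fin n → V)
    (hb : ∀ j, b j ≠ α ∧ ∀ v, v ≠ α → ψ j v ≤ ψ j (b j))
    (S : Finset (Fin n)) (hScard : S.card = k)
    (htop : ∀ j ∈ S, ∀ j' ∉ S, ψ j' α - ψ j' (b j') ≤ ψ j α - ψ j (b j))
    (w : Fin n → V)
    (hw : (Finset.univ.filter fun j => w j = α).card = k) :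
    ∑ j, ψ j (w j) ≤ ∑ j, ψ j (if j ∈ S then α else b j) := by
  classical
  set f : Fin n → ℝ := fun j => ψ j α - ψ j (b j) with hf
  set T : Finset (Fin n) := Finset.univ.filter fun j => w j = α with hT
  have hmem : ∀ j, j ∈ T ↔ w j = α := by intro j; simp [hT]
  have split : ∀ U : Finset (Fin n), ∑ j, (if j ∈ U then ψ j α else ψ j (b j))
      = ∑ j, ψ j (b j) + ∑ j ∈ U, f j := by
    intro U
    have : ∀ j : Fin n, (if j ∈ U then ψ j α else ψ j (b j))
        = ψ j (b j) + (if j ∈ U then f j else 0) := by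
      intro j; by_cases h : j ∈ U <;> simp [h, hf]
    rw [Finset.sum_congr rfl fun j _ => this j, Finset.sum_add_distrib,
      Finset.sum_ite_mem, Finset.univ_inter]
  have step1 : ∑ j, ψ j (w j) ≤ ∑ j, (if j ∈ T then ψ j α else ψ j (b j)) := by
    apply Finset.sum_le_sum
    intro j _
    by_cases h : j ∈ T
    · simp [h, (hmem j).mp h]
    · simp only [h, if_false]
      exact (hb j).2 _ (fun hc => h ((hmem j).mpr hc))
  have hcard : (T \ S).card = (S \ T).card := by
    have h1 : (T \ S).card + (T ∩ S).card = T.card := Finset.card_sdiff_add_card_inter T S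
    have h2 : (S \ T).card + (S ∩ T).card = S.card := Finset.card_sdiff_add_card_inter S T
    rw [Finset.inter_comm] at h2
    omega
  have key : ∑ j ∈ T, f j ≤ ∑ j ∈ S, f j := by
    have hdiff : ∑ j ∈ T \ S, f j ≤ ∑ j ∈ S \ T, f j := by
      have e : (T \ S : Finset (Fin n)) ≃ (S \ T : Finset (Fin n)) :=
        Finset.equivOfCardEq hcard
      calc ∑ j ∈ T \ S, f j = ∑ x : (T \ S : Finset (Fin n)), f x :=
            (Finset.sum_attach _ _).symm
        _ = ∑ y : (S \ T : Finset (Fin n)), f (e.symm y) :=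
            (Equiv.sum_comp e.symm fun x => f x).symm
        _ ≤ ∑ y : (S \ T : Finset (Fin n)), f y := by
            apply Finset.sum_le_sum
            intro y _
            have h1 : (e.symm y : Fin n) ∉ S := (Finset.mem_sdiff.mp (e.symm y).2).2
            have h2 : (y : Fin n) ∈ S := (Finset.mem_sdiff.mp y.2).1
            exact htop y h2 _ h1
        _ = ∑ j ∈ S \ T, f j := Finset.sum_attach _ _
    have hT' : ∑ j ∈ T ∩ S, f j + ∑ j ∈ T \ S, f j = ∑ j ∈ T, f j :=
      Finset.sum_inter_add_sum_sdiff T S f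
    have hS' : ∑ j ∈ S ∩ T, f j + ∑ j ∈ S \ T, f j = ∑ j ∈ S, f j :=
      Finset.sum_inter_add_sum_sdiff S T f
    rw [Finset.inter_comm] at hS'
    linarith
  calc ∑ j, ψ j (w j) ≤ ∑ j, (if j ∈ T then ψ j α else ψ j (b j)) := step1
    _ = ∑ j, ψ j (b j) + ∑ j ∈ T, f j := split T
    _ ≤ ∑ j, ψ j (b j) + ∑ j ∈ S, f j := by linarith
    _ = ∑ j, (if j ∈ S then ψ j α else ψ j (b j)) := (split S).symm
    _ = ∑ j, ψ j (if j ∈ S then α else b j) := by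
        apply Finset.sum_congr rfl
        intro j _
        by_cases h : j ∈ S <;> simp [h]
end

section
/- For the Potts clique potential C(v) = λ Σ_v n_v(v)^2 with λ > 0, the α-pass algorithm's output v̂ satisfies F(v̂) ≥ (4/5) F(v*), where v* is an optimal assignment. -/
open Finset

/-- For the Potts clique potential `C(v) = λ Σ_v n_v(v)²` with `λ > 0` and
nonnegative vertex potentials, the α-pass output `v̂` (which scores at least as well as, for
every value `α` and count `k`, the vertex-score-optimal assignment with `n_α = k`) satisfies
`F(v̂) ≥ (4/5) F(v*)` for every assignment `v*`. -/
theorem alpha_pass_potts_four_fifths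
    {n R : ℕ} (lam : ℝ) (hlam : 0 < lam)
    (ψ : Fin n → Fin R → ℝ) (hψ : ∀ j v, 0 ≤ ψ j v)
    (F : (Fin n → Fin R) → ℝ)
    (hF : ∀ w, F w = ∑ j, ψ j (w j) +
      lam * ∑ v, ((Finset.univ.filter fun j => w j = v).card : ℝ) ^ 2)
    (vhat : Fin n → Fin R)
    (hvhat : ∀ (α : Fin R) (k : ℕ), k ≤ n → ∃ u : Fin n → Fin R,
      (Finset.univ.filter fun j => u j = α).card = k ∧
      (∀ w : Fin n → Fin R, (Finset.univ.filter fun j => w j = α).card = k →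
        ∑ j, ψ j (w j) ≤ ∑ j, ψ j (u j)) ∧
      F u ≤ F vhat) :
    ∀ w : Fin n → Fin R, (4 / 5) * F w ≤ F vhat := by
  intro w
  rcases Nat.eq_zero_or_pos n with hn | hn
  · subst hn
    have h0 : F w = 0 := by rw [hF w]; simp
    have h1 : (0:ℝ) ≤ F vhat := by
      rw [hF vhat]
      have : (0:ℝ) ≤ ∑ v, ((Finset.univ.filter fun j => vhat j = v).card : ℝ) ^ 2 :=
        Finset.sum_nonneg fun v _ => sq_nonneg _
      have hS : (0:ℝ) ≤ ∑ j, ψ j (vhat j) := Finset.sum_nonneg fun j _ => hψ j _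
      nlinarith
    rw [h0]; linarith
  · -- choose majority value α of w
    have hR : (Finset.univ : Finset (Fin R)).Nonempty := ⟨w ⟨0, hn⟩, mem_univ _⟩
    obtain ⟨α, -, hα⟩ := Finset.exists_max_image (Finset.univ : Finset (Fin R))
      (fun v => (Finset.univ.filter fun j => w j = v).card) hR
    set k : ℕ := (Finset.univ.filter fun j => w j = α).card with hkdef
    have hkn : k ≤ n := by
      calc k ≤ (Finset.univ : Finset (Fin n)).card := Finset.card_filter_le _ _
        _ = n := by simp
    obtain ⟨u, huc, humax, huF⟩ := hvhat α k hkn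
    -- bound 1 : S(w) + lam k² ≤ F vhat
    have hS : ∑ j, ψ j (w j) ≤ ∑ j, ψ j (u j) := humax w rfl
    have hCu : ((k:ℝ))^2 ≤ ∑ v, ((Finset.univ.filter fun j => u j = v).card : ℝ) ^ 2 := by
      have := Finset.single_le_sum
        (f := fun v => ((Finset.univ.filter fun j => u j = v).card : ℝ) ^ 2)
        (fun v _ => sq_nonneg _) (mem_univ α)
      simpa only [huc] using this
    have h1 : ∑ j, ψ j (w j) + lam * (k:ℝ)^2 ≤ F vhat := by
      calc ∑ j, ψ j (w j) + lam * (k:ℝ)^2 ≤ F u := by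
            rw [hF u]
            exact add_le_add hS (mul_le_mul_of_nonneg_left hCu hlam.le)
        _ ≤ F vhat := huF
    -- bound 2 : lam n² ≤ F vhat
    obtain ⟨u2, hu2c, -, hu2F⟩ := hvhat α n le_rfl
    have h2 : lam * (n:ℝ)^2 ≤ F vhat := by
      have hS2 : (0:ℝ) ≤ ∑ j, ψ j (u2 j) := Finset.sum_nonneg fun j _ => hψ j _
      have hC2 : ((n:ℝ))^2 ≤ ∑ v, ((Finset.univ.filter fun j => u2 j = v).card : ℝ) ^ 2 := by
        have := Finset.single_le_sum
          (f := fun v => ((Finset.univ.filter fun j => u2 j = v).card : ℝ) ^ 2)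
          (fun v _ => sq_nonneg _) (mem_univ α)
        simpa only [hu2c] using this
      calc lam * (n:ℝ)^2 ≤ F u2 := by
            rw [hF u2]
            nlinarith [mul_le_mul_of_nonneg_left hC2 hlam.le]
        _ ≤ F vhat := hu2F
    -- counts of w sum to n
    have hsum : ∑ v, (Finset.univ.filter fun j => w j = v).card = n := by
      have := Finset.card_eq_sum_card_fiberwise (s := (Finset.univ : Finset (Fin n)))
        (t := (Finset.univ : Finset (Fin R))) (f := w) (fun j _ => mem_univ _)
      simpa using this.symm
    -- Σ counts² ≤ k n
    have hTn : ∑ v, ((Finset.univ.filter fun j => w j = v).card) ^ 2 ≤ k * n := by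
      calc ∑ v, ((Finset.univ.filter fun j => w j = v).card) ^ 2
          ≤ ∑ v, k * ((Finset.univ.filter fun j => w j = v).card) := by
            refine Finset.sum_le_sum fun v _ => ?_
            have hv := hα v (mem_univ v)
            calc ((Finset.univ.filter fun j => w j = v).card) ^ 2
                = ((Finset.univ.filter fun j => w j = v).card) *
                  ((Finset.univ.filter fun j => w j = v).card) := sq _
              _ ≤ k * ((Finset.univ.filter fun j => w j = v).card) :=
                  Nat.mul_le_mul_right _ hv
        _ = k * n := by rw [← Finset.mul_sum, hsum]
    have hT : ∑ v, ((Finset.univ.filter fun j => w j = v).card : ℝ) ^ 2 ≤ (k:ℝ) * n := by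
      calc ∑ v, ((Finset.univ.filter fun j => w j = v).card : ℝ) ^ 2
          = ((∑ v, ((Finset.univ.filter fun j => w j = v).card) ^ 2 : ℕ) : ℝ) := by push_cast; rfl
        _ ≤ ((k * n : ℕ) : ℝ) := Nat.cast_le.mpr hTn
        _ = (k:ℝ) * n := by push_cast; rfl
    have hSw : (0:ℝ) ≤ ∑ j, ψ j (w j) := Finset.sum_nonneg fun j _ => hψ j _
    rw [hF w]
    nlinarith [mul_nonneg hlam.le (sq_nonneg ((n:ℝ) - 2*(k:ℝ))),
      mul_le_mul_of_nonneg_left hT hlam.le]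
end

section
/- For the Potts clique potential with λ > 0, the α-pass algorithm's output v̂ satisfies F(v̂) ≥ (13/15) F(v*), where v* is the optimal assignment. -/
/-!
Fix an assignment `w`; let `x v` be the number of vertices it labels `v` and `S v` the vertex
score they collect. Relabelling to `α` every vertex whose label lies in `A ∋ α` loses at most the
scores of the labels in `A \ {α}`, since potentials are nonnegative, and leaves `∑_{v ∈ A} x v`
vertices labelled `α`. The α-pass step for `α` and this count beats the relabelled assignment, so
`F(v̂) ≥ ∑_{v ∉ A \ {α}} S v + λ (∑_{v ∈ A} x v)²`.

Adding the bounds for merging all labels into each `β ∈ A \ {α}` restores the lost scores: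
`|A| F(v̂) ≥ ∑ S + λ (∑_{v ∈ A} x v)² + (|A| - 1) λ n²`. Taking for `A` the one, two and three most
frequent labels, with counts `a ≥ b ≥ c` (the other labels have total count `M` and squared
counts summing to `Q ≤ M · min c M`), the combinations `11 (|A| = 1) + 2 (|A| = 2)` and
`12 (|A| = 1) + (|A| = 3)` bound `15 F(v̂)` from below by two quadratic forms in the counts, and a
positive mixture of the two shows that one of them always dominates `13 F(w)`. With fewer than
three labels the missing counts are taken to be zero.
-/

open Finset

theorem thirteen_mul_sum_sq_le_or {a b c M Q : ℝ} (hc : 0 ≤ c) (hcb : c ≤ b) (hba : b ≤ a)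
    (hM : 0 ≤ M) (hQc : Q ≤ M * c) (hQM : Q ≤ M ^ 2) :
    13 * (a ^ 2 + b ^ 2 + c ^ 2 + Q) ≤ 11 * a ^ 2 + 2 * (a + b) ^ 2 + 2 * (a + b + c + M) ^ 2 ∨
      13 * (a ^ 2 + b ^ 2 + c ^ 2 + Q) ≤
        12 * a ^ 2 + (a + b + c) ^ 2 + 2 * (a + b + c + M) ^ 2 := by
  have hu := sub_nonneg.2 hba
  have hv := sub_nonneg.2 hcb
  have hb := hc.trans hcb
  have hQ : 13 * Q ≤ 4 * (a + b + c) * M + 2 * M ^ 2 := by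
    linarith [mul_nonneg hu hM, mul_nonneg hv hM, mul_nonneg hc hM]
  -- Neither alternative holds for all inputs, but this positive mixture of the two always does.
  have key : 0 ≤ (b - c) * (11 * a ^ 2 + 2 * (a + b) ^ 2 + 2 * (a + b + c + M) ^ 2
        - 13 * (a ^ 2 + b ^ 2 + c ^ 2 + Q)) +
      c * (12 * a ^ 2 + (a + b + c) ^ 2 + 2 * (a + b + c + M) ^ 2
        - 13 * (a ^ 2 + b ^ 2 + c ^ 2 + Q)) := by
    linarith [mul_nonneg (mul_nonneg hv hc) hc, mul_nonneg (mul_nonneg hv hv) hc,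
      mul_nonneg (mul_nonneg hv hv) hv, mul_nonneg (mul_nonneg hu hv) hc,
      mul_nonneg (mul_nonneg hu hv) hv, mul_nonneg (mul_nonneg hu hu) hv,
      mul_nonneg (mul_nonneg hu hc) hc, mul_nonneg (mul_nonneg hu hu) hc,
      mul_nonneg hb (sub_nonneg.2 hQ)]
  rcases hc.eq_or_lt with rfl | hc
  · left; nlinarith
  · by_contra! h
    nlinarith [mul_nonneg hv (sub_nonneg.2 h.1.le), mul_pos hc (sub_pos.2 h.2)]

theorem thirteen_mul_le_fifteen_mul_of_sorted {P B lam a b c M Q : ℝ} (hlam : 0 ≤ lam)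
    (hc : 0 ≤ c) (hcb : c ≤ b) (hba : b ≤ a) (hM : 0 ≤ M) (hQc : Q ≤ M * c) (hQM : Q ≤ M ^ 2)
    (h₁ : P + lam * a ^ 2 ≤ B)
    (h₂ : P + lam * (a + b) ^ 2 + lam * (a + b + c + M) ^ 2 ≤ 2 * B)
    (h₃ : P + lam * (a + b + c) ^ 2 + 2 * (lam * (a + b + c + M) ^ 2) ≤ 3 * B) :
    13 * (P + lam * (a ^ 2 + b ^ 2 + c ^ 2 + Q)) ≤ 15 * B := by
  rcases thirteen_mul_sum_sq_le_or hc hcb hba hM hQc hQM with h | h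
  · linarith [mul_le_mul_of_nonneg_left h hlam]
  · linarith [mul_le_mul_of_nonneg_left h hlam]

section Merge

variable {ι : Type*} [Fintype ι] [DecidableEq ι]

/-- `B` dominates the score bound of every merge of the labels of `A` into `α ∈ A`, when label `v`
carries vertex score `S v` and count `x v`. -/
def IsMergeBound (S x : ι → ℝ) (lam B : ℝ) : Prop :=
  ∀ A : Finset ι, ∀ α ∈ A, ∑ v ∈ (A.erase α)ᶜ, S v + lam * (∑ v ∈ A, x v) ^ 2 ≤ B

variable {S x : ι → ℝ} {lam B : ℝ}

theorem IsMergeBound.card_mul_le (h : IsMergeBound S x lam B) {A : Finset ι} (hA : A.Nonempty) :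
    ∑ v, S v + lam * (∑ v ∈ A, x v) ^ 2 + (#A - 1 : ℝ) * (lam * (∑ v, x v) ^ 2) ≤ #A * B := by
  obtain ⟨α, hα⟩ := hA
  have hall : ∀ β ∈ A.erase α, S β + lam * (∑ v, x v) ^ 2 ≤ B := fun β _ => by
    simpa using h univ β (mem_univ β)
  have hsum := sum_le_sum hall
  rw [sum_add_distrib, sum_const, sum_const, nsmul_eq_mul, nsmul_eq_mul,
    card_erase_of_mem hα, Nat.cast_sub (card_pos.2 ⟨α, hα⟩)] at hsum
  have := h A α hα
  rw [← sum_compl_add_sum (A.erase α)]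
  push_cast at hsum ⊢
  linarith

theorem IsMergeBound.add_sq_le (h : IsMergeBound S x lam B) (α : ι) :
    ∑ v, S v + lam * x α ^ 2 ≤ B := by
  simpa using h.card_mul_le (singleton_nonempty α)

theorem IsMergeBound.add_sq_pair_le (h : IsMergeBound S x lam B) {α β : ι} (hαβ : α ≠ β) :
    ∑ v, S v + lam * (x α + x β) ^ 2 + lam * (∑ v, x v) ^ 2 ≤ 2 * B := by
  have := h.card_mul_le (insert_nonempty α {β})
  rw [sum_pair hαβ, card_pair hαβ] at this
  norm_num at this
  exact this

theorem IsMergeBound.add_sq_triple_le (h : IsMergeBound S x lam B) {α β γ : ι} (hαβ : α ≠ β)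
    (hαγ : α ≠ γ) (hβγ : β ≠ γ) :
    ∑ v, S v + lam * (x α + x β + x γ) ^ 2 + 2 * (lam * (∑ v, x v) ^ 2) ≤ 3 * B := by
  have hα : α ∉ ({β, γ} : Finset ι) := by simp [hαβ, hαγ]
  have := h.card_mul_le (insert_nonempty α {β, γ})
  rw [sum_insert hα, sum_pair hβγ, card_insert_of_notMem hα, card_pair hβγ] at this
  norm_num at this
  linarith

theorem IsMergeBound.thirteen_mul_le_of_top_three (h : IsMergeBound S x lam B)
    (hx : ∀ v, 0 ≤ x v) (hlam : 0 ≤ lam) {α β γ : ι} (hαβ : α ≠ β) (hαγ : α ≠ γ) (hβγ : β ≠ γ)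
    (hxα : ∀ v, x v ≤ x α) (hxβ : x γ ≤ x β)
    (hxγ : ∀ v ∈ ((univ.erase α).erase β).erase γ, x v ≤ x γ) :
    13 * (∑ v, S v + lam * ∑ v, x v ^ 2) ≤ 15 * B := by
  set T := ((univ.erase α).erase β).erase γ
  have hβ : β ∈ univ.erase α := mem_erase.2 ⟨hαβ.symm, mem_univ β⟩
  have hγ : γ ∈ (univ.erase α).erase β :=
    mem_erase.2 ⟨hβγ.symm, mem_erase.2 ⟨hαγ.symm, mem_univ γ⟩⟩
  have hsum : ∀ f : ι → ℝ, ∑ v, f v = f α + f β + f γ + ∑ v ∈ T, f v := fun f => by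
    rw [← add_sum_erase _ _ (mem_univ α), ← add_sum_erase _ _ hβ, ← add_sum_erase _ _ hγ]
    ring
  have hQc : ∑ v ∈ T, x v ^ 2 ≤ (∑ v ∈ T, x v) * x γ := by
    rw [sum_mul]
    refine sum_le_sum fun v hv => ?_
    rw [sq]
    exact mul_le_mul_of_nonneg_left (hxγ v hv) (hx v)
  have hQM : ∑ v ∈ T, x v ^ 2 ≤ (∑ v ∈ T, x v) ^ 2 := sum_sq_le_sq_sum_of_nonneg fun v _ => hx v
  have h₂ := h.add_sq_pair_le hαβ
  have h₃ := h.add_sq_triple_le hαβ hαγ hβγ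
  rw [hsum x] at h₂ h₃
  rw [hsum fun v => x v ^ 2]
  have := thirteen_mul_le_fifteen_mul_of_sorted hlam (hx γ) hxβ (hxα β)
    (sum_nonneg fun v _ => hx v) hQc hQM (h.add_sq_le α) h₂ h₃
  linarith

theorem IsMergeBound.thirteen_mul_le [Nonempty ι] (h : IsMergeBound S x lam B)
    (hS : ∀ v, 0 ≤ S v) (hx : ∀ v, 0 ≤ x v) (hlam : 0 ≤ lam) :
    13 * (∑ v, S v + lam * ∑ v, x v ^ 2) ≤ 15 * B := by
  have hP : 0 ≤ ∑ v, S v := sum_nonneg fun v _ => hS v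
  obtain ⟨α, -, hxα⟩ := exists_max_image univ x univ_nonempty
  have h₁ := h.add_sq_le α
  rcases (univ.erase α).eq_empty_or_nonempty with hempty | hne
  · have hsum : ∀ f : ι → ℝ, ∑ v, f v = f α := fun f => by
      rw [← add_sum_erase _ _ (mem_univ α), hempty, sum_empty, add_zero]
    rw [hsum fun v => x v ^ 2]
    linarith [mul_nonneg hlam (sq_nonneg (x α))]
  obtain ⟨β, hβ, hxβ⟩ := exists_max_image _ x hne
  have hαβ : α ≠ β := (ne_of_mem_erase hβ).symm
  rcases ((univ.erase α).erase β).eq_empty_or_nonempty with hempty | hne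
  · have hsum : ∀ f : ι → ℝ, ∑ v, f v = f α + f β := fun f => by
      rw [← add_sum_erase _ _ (mem_univ α), ← add_sum_erase _ _ hβ, hempty, sum_empty]; ring
    have h₂ := h.add_sq_pair_le hαβ
    rw [hsum x] at h₂
    rw [hsum fun v => x v ^ 2]
    have := thirteen_mul_le_fifteen_mul_of_sorted (c := 0) (M := 0) (Q := 0) hlam le_rfl
      (hx β) (hxα β (mem_univ _)) le_rfl (by simp) (by simp) h₁ (by linarith) (by linarith)
    linarith
  obtain ⟨γ, hγ, hxγ⟩ := exists_max_image _ x hne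
  exact h.thirteen_mul_le_of_top_three hx hlam hαβ (ne_of_mem_erase (mem_of_mem_erase hγ)).symm
    (ne_of_mem_erase hγ).symm (fun v => hxα v (mem_univ v)) (hxβ γ (mem_of_mem_erase hγ))
    fun v hv => hxγ v (mem_of_mem_erase hv)

end Merge

section Labelling

variable {V L : Type*} [DecidableEq L]

def mergeLabels (w : V → L) (A : Finset L) (α : L) : V → L :=
  fun j => if w j ∈ A then α else w j

theorem mergeLabels_eq_self {w : V → L} {A : Finset L} {α : L} {j : V}
    (hj : w j ∉ A.erase α) : mergeLabels w A α j = w j := by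
  grind [mergeLabels]

variable [Fintype V]

theorem card_filter_mergeLabels {w : V → L} {A : Finset L} {α : L} (hα : α ∈ A) :
    #{j | mergeLabels w A α j = α} = ∑ v ∈ A, #{j | w j = v} := by
  rw [filter_congr fun j _ => show mergeLabels w A α j = α ↔ w j ∈ A by grind [mergeLabels],
    card_eq_sum_card_fiberwise (s := univ.filter fun j => w j ∈ A) (f := w) (t := A)
      fun j hj => (mem_filter.1 hj).2]
  refine sum_congr rfl fun v hv => ?_
  rw [filter_filter]
  exact congrArg card (filter_congr fun j _ => by grind)

theorem sum_compl_le_sum_mergeLabels [Fintype L] {ψ : V → L → ℝ} (hψ : ∀ j v, 0 ≤ ψ j v)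
    (w : V → L) (A : Finset L) (α : L) :
    ∑ v ∈ (A.erase α)ᶜ, ∑ j with w j = v, ψ j (w j) ≤ ∑ j, ψ j (mergeLabels w A α j) :=
  calc ∑ v ∈ (A.erase α)ᶜ, ∑ j with w j = v, ψ j (w j)
      = ∑ v ∈ (A.erase α)ᶜ, ∑ j with w j = v, ψ j (mergeLabels w A α j) :=
        sum_congr rfl fun v hv => sum_congr rfl fun j hj => by
          rw [mergeLabels_eq_self ((mem_filter.1 hj).2 ▸ mem_compl.1 hv)]
    _ ≤ ∑ v, ∑ j with w j = v, ψ j (mergeLabels w A α j) :=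
        sum_le_sum_of_subset_of_nonneg (subset_univ _) fun _ _ _ => sum_nonneg fun _ _ => hψ _ _
    _ = ∑ j, ψ j (mergeLabels w A α j) := sum_fiberwise _ _ _

theorem add_sq_card_le_of_alphaPass [Fintype L] {lam : ℝ} (hlam : 0 ≤ lam) {ψ : V → L → ℝ}
    {F : (V → L) → ℝ}
    (hF : ∀ w, F w = ∑ j, ψ j (w j) + lam * ∑ v, (#{j | w j = v} : ℝ) ^ 2) {vhat : V → L}
    (hvhat : ∀ (α : L) (k : ℕ), k ≤ Fintype.card V → ∃ u : V → L, #{j | u j = α} = k ∧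
      (∀ w : V → L, #{j | w j = α} = k → ∑ j, ψ j (w j) ≤ ∑ j, ψ j (u j)) ∧ F u ≤ F vhat)
    (u₀ : V → L) (α : L) :
    ∑ j, ψ j (u₀ j) + lam * (#{j | u₀ j = α} : ℝ) ^ 2 ≤ F vhat := by
  obtain ⟨u, hcard, hopt, hFu⟩ :=
    hvhat α _ ((card_filter_le univ fun j => u₀ j = α).trans_eq card_univ)
  have hsq : (#{j | u j = α} : ℝ) ^ 2 ≤ ∑ v, (#{j | u j = v} : ℝ) ^ 2 :=
    single_le_sum (f := fun v => (#{j | u j = v} : ℝ) ^ 2) (fun v _ => sq_nonneg _) (mem_univ α)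
  rw [hF] at hFu
  rw [hcard] at hsq
  nlinarith [hopt u₀ rfl, mul_le_mul_of_nonneg_left hsq hlam]

end Labelling

/-- For the Potts clique potential `C(v) = λ Σ_v n_v(v)²` with `λ > 0` and
nonnegative vertex potentials, the α-pass output `v̂` (which scores at least as well as, for
every value `α` and count `k`, the vertex-score-optimal assignment with `n_α = k`) satisfies
`F(v̂) ≥ (13/15) F(v*)` for every assignment `v*`. -/
theorem alpha_pass_potts_thirteen_fifteenths
    {n R : ℕ} (lam : ℝ) (hlam : 0 < lam)
    (ψ : Fin n → Fin R → ℝ) (hψ : ∀ j v, 0 ≤ ψ j v)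
    (F : (Fin n → Fin R) → ℝ)
    (hF : ∀ w, F w = ∑ j, ψ j (w j) +
      lam * ∑ v, ((Finset.univ.filter fun j => w j = v).card : ℝ) ^ 2)
    (vhat : Fin n → Fin R)
    (hvhat : ∀ (α : Fin R) (k : ℕ), k ≤ n → ∃ u : Fin n → Fin R,
      (Finset.univ.filter fun j => u j = α).card = k ∧
      (∀ w : Fin n → Fin R, (Finset.univ.filter fun j => w j = α).card = k →
        ∑ j, ψ j (w j) ≤ ∑ j, ψ j (u j)) ∧
      F u ≤ F vhat) :
    ∀ w : Fin n → Fin R, (13 / 15) * F w ≤ F vhat := by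
  intro w
  rcases isEmpty_or_nonempty (Fin R) with hR | hR
  · have := w.isEmpty
    simp [hF]
  have hpass := add_sq_card_le_of_alphaPass hlam.le hF
    (fun α k hk => hvhat α k (by simpa using hk))
  have hmerge : IsMergeBound (fun v => ∑ j with w j = v, ψ j (w j))
      (fun v => (#{j | w j = v} : ℝ)) lam (F vhat) := fun A α hα => by
    have := hpass (mergeLabels w A α) α
    rw [card_filter_mergeLabels hα] at this
    push_cast at this
    linarith [sum_compl_le_sum_mergeLabels hψ w A α]
  have hbound := hmerge.thirteen_mul_le (fun v => sum_nonneg fun j _ => hψ j _)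
    (fun v => Nat.cast_nonneg _) hlam.le
  rw [sum_fiberwise univ w fun j => ψ j (w j)] at hbound
  rw [hF]
  linarith
end

section
/- The generalized α-pass algorithm with parameter q = 2 satisfies F(v̂) ≥ (8/9) F(v*) for the Potts clique potential with λ > 0. -/
open Finset

/-!
Let `a ≥ b` be the two largest label counts of an assignment `w`, `N` the number of vertices and
`P` its vertex score, so that its clique score is at most `a² + b (N - a)`. The pass over the pair
of the two most frequent labels of `w`, with the count of `w` on them, sees an assignment whose
vertex score is at least `P` and whose clique score is at least `(a + b)² / 2`; the pass over the
most frequent label alone gives `P + λ a²`, and putting every vertex on one label gives `λ N²`.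
An elementary inequality shows that `1/9` of the last bound plus `8/9` of the better of the first
two dominate `8/9` of the score of `w`.
-/

variable {ι κ : Type*} [Fintype ι] [DecidableEq κ]

def labelCount (u : ι → κ) (v : κ) : ℕ := #{j | u j = v}

theorem card_filter_eq_or_eq (u : ι → κ) {α β : κ} (hαβ : α ≠ β) :
    #{j | u j = α ∨ u j = β} = labelCount u α + labelCount u β := by
  classical
  rw [filter_or, card_union_of_disjoint]
  · rfl
  exact disjoint_filter.2 fun j _ hα hβ => hαβ (hα.symm.trans hβ)

variable [Fintype κ]

def pottsScore (lam : ℝ) (ψ : ι → κ → ℝ) (u : ι → κ) : ℝ :=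
  ∑ j, ψ j (u j) + lam * ∑ v, (labelCount u v : ℝ) ^ 2

/-- `vhat` scores at least as well as the candidate assignments of the generalized α-pass with
`q = 2`: for every pair of labels and every count, one assignment with that many vertices on the
pair that is vertex-score optimal among such assignments. -/
def DominatesPairPass (lam : ℝ) (ψ : ι → κ → ℝ) (vhat : ι → κ) : Prop :=
  ∀ (α β : κ) (k : ℕ), k ≤ Fintype.card ι → ∃ u : ι → κ,
    #{j | u j = α ∨ u j = β} = k ∧
    (∀ w : ι → κ, #{j | w j = α ∨ w j = β} = k → ∑ j, ψ j (w j) ≤ ∑ j, ψ j (u j)) ∧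
    pottsScore lam ψ u ≤ pottsScore lam ψ vhat

theorem sum_labelCount (u : ι → κ) : ∑ v, labelCount u v = Fintype.card ι :=
  (card_eq_sum_card_fiberwise fun j _ => mem_univ (u j)).symm

theorem pottsScore_nonneg {lam : ℝ} (hlam : 0 ≤ lam) {ψ : ι → κ → ℝ} (hψ : ∀ j v, 0 ≤ ψ j v)
    (u : ι → κ) : 0 ≤ pottsScore lam ψ u :=
  add_nonneg (sum_nonneg fun j _ => hψ j (u j))
    (mul_nonneg hlam (sum_nonneg fun _ _ => sq_nonneg _))

theorem sum_sq_le_sq_add_mul_sum_erase {f : κ → ℝ} (hf : ∀ v, 0 ≤ f v) {α : κ} {b : ℝ}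
    (hb : ∀ v, v ≠ α → f v ≤ b) : ∑ v, f v ^ 2 ≤ f α ^ 2 + b * ∑ v ∈ univ.erase α, f v := by
  rw [← add_sum_erase _ _ (mem_univ α), mul_sum]
  gcongr with v hv
  nlinarith [hf v, hb v (ne_of_mem_erase hv)]

/-- When `2 b ≤ a` the term `a²` carries the bound, otherwise `(a + b)² / 2` does; in the second
case the difference is a quadratic in `y` with minimum `4 (a - b) (3 b - a)` at `y = 4 b - a`. -/
theorem eight_mul_sq_add_mul_le {a b y : ℝ} (hba : b ≤ a) (hy : 0 ≤ y) :
    8 * (a ^ 2 + b * y) ≤ (a + y) ^ 2 + 8 * max (a ^ 2) ((a + b) ^ 2 / 2) := by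
  rcases le_or_gt (2 * b) a with hab | hab
  · nlinarith [le_max_left (a ^ 2) ((a + b) ^ 2 / 2), sq_nonneg (a - y),
      mul_nonneg (sub_nonneg.2 hab) hy]
  · nlinarith [le_max_right (a ^ 2) ((a + b) ^ 2 / 2), sq_nonneg (y + a - 4 * b),
      mul_nonneg (sub_nonneg.2 hba) (by linarith : (0 : ℝ) ≤ 3 * b - a)]

namespace DominatesPairPass

variable {lam : ℝ} {ψ : ι → κ → ℝ} {vhat : ι → κ}

theorem exists_le (h : DominatesPairPass lam ψ vhat) (w : ι → κ) (α β : κ) :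
    ∃ u : ι → κ, #{j | u j = α ∨ u j = β} = #{j | w j = α ∨ w j = β} ∧
      ∑ j, ψ j (w j) + lam * ∑ v, (labelCount u v : ℝ) ^ 2 ≤ pottsScore lam ψ vhat := by
  obtain ⟨u, hcard, hopt, hu⟩ := h α β _ (card_le_univ _)
  exact ⟨u, hcard, (add_le_add (hopt w rfl) le_rfl).trans hu⟩

theorem single_le (h : DominatesPairPass lam ψ vhat) (hlam : 0 ≤ lam) (w : ι → κ) (α : κ) :
    ∑ j, ψ j (w j) + lam * (labelCount w α : ℝ) ^ 2 ≤ pottsScore lam ψ vhat := by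
  obtain ⟨u, hcard, hu⟩ := h.exists_le w α α
  simp only [or_self] at hcard
  have hα : (labelCount w α : ℝ) ^ 2 ≤ ∑ v, (labelCount u v : ℝ) ^ 2 := by
    rw [← show labelCount u α = labelCount w α from hcard]
    exact single_le_sum (f := fun v => (labelCount u v : ℝ) ^ 2) (fun v _ => sq_nonneg _)
      (mem_univ α)
  exact (add_le_add le_rfl (mul_le_mul_of_nonneg_left hα hlam)).trans hu

theorem pair_le (h : DominatesPairPass lam ψ vhat) (hlam : 0 ≤ lam) (w : ι → κ) {α β : κ}
    (hαβ : α ≠ β) :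
    ∑ j, ψ j (w j) + lam * ((labelCount w α + labelCount w β : ℝ) ^ 2 / 2) ≤
      pottsScore lam ψ vhat := by
  obtain ⟨u, hcard, hu⟩ := h.exists_le w α β
  rw [card_filter_eq_or_eq u hαβ, card_filter_eq_or_eq w hαβ] at hcard
  have hpair : (labelCount u α : ℝ) ^ 2 + (labelCount u β : ℝ) ^ 2 ≤
      ∑ v, (labelCount u v : ℝ) ^ 2 := by
    rw [← sum_pair (f := fun v => (labelCount u v : ℝ) ^ 2) hαβ]
    exact sum_le_sum_of_subset_of_nonneg (subset_univ _) fun v _ _ => sq_nonneg _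
  have hcast : (labelCount w α + labelCount w β : ℝ) = labelCount u α + labelCount u β := by
    exact_mod_cast hcard.symm
  have hsq : (labelCount w α + labelCount w β : ℝ) ^ 2 / 2 ≤ ∑ v, (labelCount u v : ℝ) ^ 2 := by
    rw [hcast]
    nlinarith [sq_nonneg ((labelCount u α : ℝ) - labelCount u β)]
  exact (add_le_add le_rfl (mul_le_mul_of_nonneg_left hsq hlam)).trans hu

theorem card_sq_le (h : DominatesPairPass lam ψ vhat) (hlam : 0 ≤ lam) (hψ : ∀ j v, 0 ≤ ψ j v)
    (α : κ) : lam * (Fintype.card ι : ℝ) ^ 2 ≤ pottsScore lam ψ vhat := by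
  have hconst : labelCount (fun _ : ι => α) α = Fintype.card ι := by
    simp [labelCount]
  have := h.single_le hlam (fun _ => α) α
  rw [hconst] at this
  linarith [sum_nonneg fun j (_ : j ∈ univ) => hψ j α]

theorem eight_ninths_mul_pottsScore_le (h : DominatesPairPass lam ψ vhat) (hlam : 0 ≤ lam)
    (hψ : ∀ j v, 0 ≤ ψ j v) (w : ι → κ) :
    8 / 9 * pottsScore lam ψ w ≤ pottsScore lam ψ vhat := by
  rcases subsingleton_or_nontrivial κ with hκ | hκ
  · rw [Subsingleton.elim w vhat]
    linarith [pottsScore_nonneg hlam hψ vhat]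
  set c : κ → ℝ := fun v => labelCount w v
  obtain ⟨α, -, hα⟩ := exists_max_image univ c univ_nonempty
  obtain ⟨β₀, hβ₀⟩ := exists_ne α
  obtain ⟨β, hβ, hβmax⟩ :=
    exists_max_image (univ.erase α) c ⟨β₀, mem_erase.2 ⟨hβ₀, mem_univ β₀⟩⟩
  set P := ∑ j, ψ j (w j)
  set y := ∑ v ∈ univ.erase α, c v
  have hN : c α + y = Fintype.card ι := by
    rw [add_sum_erase _ _ (mem_univ α)]
    simp only [c]
    exact_mod_cast sum_labelCount w
  have hclique : ∑ v, c v ^ 2 ≤ c α ^ 2 + c β * y :=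
    sum_sq_le_sq_add_mul_sum_erase (fun v => Nat.cast_nonneg _)
      fun v hv => hβmax v (mem_erase.2 ⟨hv, mem_univ v⟩)
  have hkey := eight_mul_sq_add_mul_le (y := y) (hα β (mem_univ β))
    (sum_nonneg fun v _ => Nat.cast_nonneg _)
  have hbest : P + lam * max (c α ^ 2) ((c α + c β) ^ 2 / 2) ≤ pottsScore lam ψ vhat := by
    rw [mul_max_of_nonneg _ _ hlam, add_max]
    exact max_le (h.single_le hlam w α) (h.pair_le hlam w (ne_of_mem_erase hβ).symm)
  have hconst := h.card_sq_le hlam hψ α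
  rw [← hN] at hconst
  have hP : 0 ≤ P := sum_nonneg fun j _ => hψ j (w j)
  have hclique' := mul_le_mul_of_nonneg_left hclique hlam
  have hkey' := mul_le_mul_of_nonneg_left hkey hlam
  change 8 / 9 * (P + lam * ∑ v, c v ^ 2) ≤ _
  linarith

end DominatesPairPass

/-- The generalized α-pass algorithm with parameter `q = 2` (which, for every
set `A` of at most two values `{α,β}` and every count `k`, considers an assignment with
exactly `k` vertices valued in `A` that is vertex-score-optimal among such assignments)
satisfies `F(v̂) ≥ (8/9) F(v*)` for the Potts clique potential with `λ > 0`. -/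
theorem generalized_alpha_pass_eight_ninths
    {n R : ℕ} (lam : ℝ) (hlam : 0 < lam)
    (ψ : Fin n → Fin R → ℝ) (hψ : ∀ j v, 0 ≤ ψ j v)
    (F : (Fin n → Fin R) → ℝ)
    (hF : ∀ w, F w = ∑ j, ψ j (w j) +
      lam * ∑ v, ((Finset.univ.filter fun j => w j = v).card : ℝ) ^ 2)
    (vhat : Fin n → Fin R)
    (hvhat : ∀ (α β : Fin R) (k : ℕ), k ≤ n → ∃ u : Fin n → Fin R,
      (Finset.univ.filter fun j => u j = α ∨ u j = β).card = k ∧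
      (∀ w : Fin n → Fin R,
        (Finset.univ.filter fun j => w j = α ∨ w j = β).card = k →
        ∑ j, ψ j (w j) ≤ ∑ j, ψ j (u j)) ∧
      F u ≤ F vhat) :
    ∀ w : Fin n → Fin R, (8 / 9) * F w ≤ F vhat := by
  obtain rfl : F = pottsScore lam ψ := funext hF
  have hpass : DominatesPairPass lam ψ vhat :=
    fun α β k hk => hvhat α β k (by simpa using hk)
  exact hpass.eight_ninths_mul_pottsScore_le hlam.le hψ
end

section
/- For a clique of n vertices with binary value set V = {0,1} and any symmetric (cardinality-based) clique potential C, the α-pass algorithm computes the exact maximizer of F(v) = Σ_j ψ_{j v_j} + C(n_0(v), n_1(v)): the maximum of F over all assignments equals the maximum over k ∈ {0,…,n} of [C(n−k, k) + (best vertex score among assignments with exactly k vertices assigned 1)], and the best such vertex score is attained by assigning 1 to the k vertices with largest ψ_{j1} − ψ_{j0}. -/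
open Finset

/-- Number of vertices assigned boolean value `v` by assignment `w`. -/
def cntB {n : ℕ} (w : Fin n → Bool) (v : Bool) : ℕ :=
  (Finset.univ.filter fun j => w j = v).card


lemma top_sum {α : Type*} [Fintype α] [DecidableEq α] (d : α → ℝ) (S T : Finset α)
    (hST : T.card = S.card)
    (h : ∀ j ∈ S, ∀ j' ∉ S, d j' ≤ d j) :
    ∑ j ∈ T, d j ≤ ∑ j ∈ S, d j := by
  have hc : (T \ S).card = (S \ T).card := by
    have h1 := Finset.card_sdiff_add_card_inter T S
    have h2 := Finset.card_sdiff_add_card_inter S T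
    rw [Finset.inter_comm] at h2
    omega
  have e := Finset.equivOfCardEq hc
  have hle : ∑ j ∈ T \ S, d j ≤ ∑ j ∈ S \ T, d j := by
    rw [← Finset.sum_coe_sort (T \ S) d, ← Finset.sum_coe_sort (S \ T) d,
      ← Equiv.sum_comp e (fun x => d x.1)]
    apply Finset.sum_le_sum
    intro x _
    have hx : (x : α) ∉ S := (Finset.mem_sdiff.mp x.2).2
    have hy : ((e x : {x // x ∈ S \ T}) : α) ∈ S := (Finset.mem_sdiff.mp (e x).2).1
    exact h _ hy _ hx
  calc ∑ j ∈ T, d j = ∑ j ∈ T ∩ S, d j + ∑ j ∈ T \ S, d j :=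
        (Finset.sum_inter_add_sum_sdiff T S d).symm
    _ ≤ ∑ j ∈ T ∩ S, d j + ∑ j ∈ S \ T, d j := by linarith
    _ = ∑ j ∈ S ∩ T, d j + ∑ j ∈ S \ T, d j := by rw [Finset.inter_comm]
    _ = ∑ j ∈ S, d j := Finset.sum_inter_add_sum_sdiff S T d

lemma sum_decomp {n : ℕ} (ψ : Fin n → Bool → ℝ) (w : Fin n → Bool) :
    ∑ j, ψ j (w j) =
      ∑ j, ψ j false + ∑ j ∈ Finset.univ.filter (fun j => w j = true),
        (ψ j true - ψ j false) := by
  rw [Finset.sum_filter, ← Finset.sum_add_distrib]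
  apply Finset.sum_congr rfl
  intro j _
  cases h : w j <;> simp [h]

lemma cnt_false {n : ℕ} (w : Fin n → Bool) :
    cntB w false = n - cntB w true := by
  unfold cntB
  have : (Finset.univ.filter fun j => w j = false) =
      (Finset.univ.filter fun j => w j = true)ᶜ := by
    ext j
    simp only [Finset.mem_filter, Finset.mem_compl, Finset.mem_univ, true_and]
    cases w j <;> simp
  rw [this, Finset.card_compl, Fintype.card_fin]

/-- For binary values and an arbitrary cardinality-based clique potential
`C(n_0, n_1)`, α-pass is exact: given for each `k` a top-`k` set `S k` of vertices by the
metric `ψ_{j1} − ψ_{j0}`, (i) the assignment giving `1` exactly on `S k` is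
vertex-score-optimal among assignments with exactly `k` ones; (ii) every assignment's `F`
score is at most `C(n−k, k) +` that best vertex score for some `k ≤ n`; and (iii) this
quantity is itself attained as `F` of the top-`k` assignment — so the maxima coincide. -/
theorem alpha_pass_exact_binary
    {n : ℕ} (ψ : Fin n → Bool → ℝ) (C : ℕ → ℕ → ℝ)
    (F : (Fin n → Bool) → ℝ)
    (hF : ∀ w, F w = ∑ j, ψ j (w j) + C (cntB w false) (cntB w true))
    (S : ℕ → Finset (Fin n))
    (hcard : ∀ k ≤ n, (S k).card = k)
    (htop : ∀ k ≤ n, ∀ j ∈ S k, ∀ j' ∉ S k,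
      ψ j' true - ψ j' false ≤ ψ j true - ψ j false) :
    (∀ k ≤ n, ∀ w' : Fin n → Bool, cntB w' true = k →
      ∑ j, ψ j (w' j) ≤ ∑ j, ψ j (if j ∈ S k then true else false)) ∧
    (∀ w : Fin n → Bool, ∃ k ≤ n,
      F w ≤ C (n - k) k + ∑ j, ψ j (if j ∈ S k then true else false)) ∧
    (∀ k ≤ n,
      C (n - k) k + ∑ j, ψ j (if j ∈ S k then true else false) =
        F (fun j => if j ∈ S k then true else false)) := by
  have hfiltS : ∀ k, (Finset.univ.filter
      fun j => (if j ∈ S k then true else false) = true) = S k := by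
    intro k; ext j; simp
  have hcntS : ∀ k ≤ n, cntB (fun j => if j ∈ S k then true else false) true = k := by
    intro k hk
    unfold cntB
    rw [hfiltS k]
    exact hcard k hk
  have part1 : ∀ k ≤ n, ∀ w' : Fin n → Bool, cntB w' true = k →
      ∑ j, ψ j (w' j) ≤ ∑ j, ψ j (if j ∈ S k then true else false) := by
    intro k hk w' hw'
    rw [sum_decomp ψ w', sum_decomp ψ (fun j => if j ∈ S k then true else false), hfiltS k]
    have hT : (Finset.univ.filter fun j => w' j = true).card = (S k).card := by
      rw [hcard k hk]; exact hw'
    have := top_sum (fun j => ψ j true - ψ j false) (S k)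
      (Finset.univ.filter fun j => w' j = true) hT (htop k hk)
    linarith
  refine ⟨part1, ?_, ?_⟩
  · intro w
    refine ⟨cntB w true, ?_, ?_⟩
    · unfold cntB; exact le_trans (Finset.card_filter_le _ _) (by simp)
    · rw [hF w, cnt_false w]
      have := part1 (cntB w true)
        (le_trans (Finset.card_filter_le _ _) (by simp)) w rfl
      linarith
  · intro k hk
    rw [hF, hcntS k hk, cnt_false, hcntS k hk]
    ring
end
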